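/- Let d = 2. For every ε > 0 there exists a constant C = C(ε) such that, for all integers a_1, a_2, a_3 with 0 < |a_1| ≤ |a_2| ≤ |a_3| and all reals M, H ≥ 1, one has N_{(a_1, a_2, a_3)}(M, H) ≤ C·M^ε·(M²H/|a_2| + HM/|a_1| + M²)^{1/2}·(M + H/|a_3|)^{1/2}. -/

import Mathlib

/-- The number of `x ∈ ℤ³` with `M ≤ x_j ≤ 2M` and
`|a_1x_1² + a_2x_2² + a_3x_3²| ≤ H`, i.e. `N_{(a₁,a₂,a₃)}(M,H)` for `d = 2`. -/
noncomputable def NcountTernarySq (a₁ a₂ a₃ : ℤ) (M H : ℝ) : ℕ :=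
  Set.ncard {x : Fin 3 → ℤ | (∀ i, M ≤ (x i : ℝ) ∧ (x i : ℝ) ≤ 2 * M) ∧
    |(a₁ : ℝ) * (x 0 : ℝ) ^ 2 + (a₂ : ℝ) * (x 1 : ℝ) ^ 2 + (a₃ : ℝ) * (x 2 : ℝ) ^ 2| ≤ H}

open Finset

/- ### Auxiliary lemmas -/

lemma pointwise_div_bound' {ε : ℝ} (hε : 0 < ε) {p : ℕ} (hp : 2 ≤ p) (e : ℕ) :
    (e + 1 : ℝ) ≤ (if (p:ℝ) ^ ε < 2 then max 1 (1/(ε * Real.log 2)) else 1)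
      * (((p:ℝ) ^ e) ^ ε) := by
  have hp0 : (0:ℝ) ≤ (p:ℝ) := by positivity
  have hkey : ((p:ℝ) ^ e) ^ ε = ((p:ℝ) ^ ε) ^ e := by
    rw [← Real.rpow_natCast ((p:ℝ)^ε) e, ← Real.rpow_natCast (p:ℝ) e,
      ← Real.rpow_mul hp0, ← Real.rpow_mul hp0, mul_comm]
  rw [hkey]
  split_ifs with h
  · have hlog2 : 0 < Real.log 2 := Real.log_pos (by norm_num)
    set K := max 1 (1/(ε * Real.log 2)) with hK
    have hK1 : (1:ℝ) ≤ K := le_max_left _ _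
    have hKe : 1 ≤ K * (ε * Real.log 2) := by
      have h2 : 1/(ε * Real.log 2) ≤ K := le_max_right _ _
      calc (1:ℝ) = (1/(ε * Real.log 2)) * (ε * Real.log 2) := by field_simp
        _ ≤ K * (ε * Real.log 2) := mul_le_mul_of_nonneg_right h2 (by positivity)
    have hpe : 1 + ε * Real.log 2 ≤ (p:ℝ) ^ ε := by
      have h2p : (2:ℝ) ≤ (p:ℝ) := by exact_mod_cast hp
      have hexp : Real.exp (ε * Real.log 2) ≤ (p:ℝ) ^ ε := by
        rw [Real.rpow_def_of_pos (by linarith)]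
        apply Real.exp_le_exp.2
        have := Real.log_le_log (by norm_num) h2p
        nlinarith [hε]
      linarith [Real.add_one_le_exp (ε * Real.log 2)]
    have hbern : 1 + (e:ℝ) * (ε * Real.log 2) ≤ (1 + ε * Real.log 2) ^ e := by
      have := one_add_mul_le_pow (a := ε * Real.log 2) (by nlinarith) e
      linarith
    have hmono : (1 + ε * Real.log 2) ^ e ≤ ((p:ℝ) ^ ε) ^ e :=
      pow_le_pow_left₀ (by positivity) hpe e
    have hKnn : (0:ℝ) ≤ K := by linarith
    calc (e + 1 : ℝ) ≤ K * (1 + (e:ℝ) * (ε * Real.log 2)) := by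
          have heq : K * (1 + (e:ℝ) * (ε * Real.log 2)) = K + (K * (ε * Real.log 2)) * e := by
            ring
          rw [heq]
          nlinarith [Nat.cast_nonneg (α := ℝ) e]
      _ ≤ K * ((p:ℝ) ^ ε) ^ e := mul_le_mul_of_nonneg_left (le_trans hbern hmono) hKnn
  · push_neg at h
    rw [one_mul]
    calc (e + 1 : ℝ) ≤ (2:ℝ) ^ e := by exact_mod_cast Nat.lt_two_pow_self (n := e)
      _ ≤ ((p:ℝ) ^ ε) ^ e := pow_le_pow_left₀ (by norm_num) h e

/-- The divisor bound: `d(n) ≪_ε n^ε`. -/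
lemma divisor_bound' {ε : ℝ} (hε : 0 < ε) :
    ∃ C : ℝ, 1 ≤ C ∧ ∀ n : ℕ, n ≠ 0 → (n.divisors.card : ℝ) ≤ C * (n:ℝ) ^ ε := by
  classical
  set K := max 1 (1/(ε * Real.log 2)) with hKdef
  have hK1 : (1:ℝ) ≤ K := le_max_left _ _
  set B := ⌈(2:ℝ) ^ (1/ε)⌉₊ with hB
  refine ⟨K ^ B, one_le_pow₀ hK1, ?_⟩
  intro n hn
  have hcard : n.divisors.card = ∏ p ∈ n.primeFactors, (n.factorization p + 1) := by
    rw [Nat.card_divisors hn]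
  have hnprod : ∏ p ∈ n.primeFactors, p ^ n.factorization p = n := by
    conv_rhs => rw [← Nat.factorization_prod_pow_eq_self hn]
    rw [Finsupp.prod, Nat.support_factorization]
  have hcastcard : (n.divisors.card : ℝ) =
      ∏ p ∈ n.primeFactors, ((n.factorization p : ℝ) + 1) := by
    rw [hcard]; push_cast; ring
  have hcastn : (n:ℝ) = ∏ p ∈ n.primeFactors, ((p:ℝ) ^ n.factorization p) := by
    conv_lhs => rw [← hnprod]
    push_cast
    ring
  set w : ℕ → ℝ := fun p => if (p:ℝ) ^ ε < 2 then K else 1 with hw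
  have step1 : (n.divisors.card : ℝ) ≤
      ∏ p ∈ n.primeFactors, (w p * (((p:ℝ) ^ n.factorization p) ^ ε)) := by
    rw [hcastcard]
    apply Finset.prod_le_prod
    · intro p _; positivity
    · intro p hpmem
      have hp2 : 2 ≤ p := (Nat.prime_of_mem_primeFactors hpmem).two_le
      exact pointwise_div_bound' hε hp2 (n.factorization p)
  have step2 : ∏ p ∈ n.primeFactors, (w p * (((p:ℝ) ^ n.factorization p) ^ ε))
      = (∏ p ∈ n.primeFactors, w p) * (n:ℝ) ^ ε := by
    rw [Finset.prod_mul_distrib, Real.finset_prod_rpow _ _ (fun p _ => by positivity) ε,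
      ← hcastn]
  have step3 : ∏ p ∈ n.primeFactors, w p ≤ K ^ B := by
    have hwprod : ∏ p ∈ n.primeFactors, w p
        = K ^ (n.primeFactors.filter (fun p : ℕ => (p:ℝ) ^ ε < 2)).card := by
      rw [← Finset.prod_filter_mul_prod_filter_not n.primeFactors
        (fun p : ℕ => (p:ℝ) ^ ε < 2) w]
      have h1 : ∏ p ∈ n.primeFactors.filter (fun p : ℕ => (p:ℝ) ^ ε < 2), w p
          = K ^ (n.primeFactors.filter (fun p : ℕ => (p:ℝ) ^ ε < 2)).card := by
        rw [Finset.prod_congr rfl (fun p hp => ?_), Finset.prod_const]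
        simp only [Finset.mem_filter] at hp
        simp [hw, if_pos hp.2]
      have h2 : ∏ p ∈ n.primeFactors.filter (fun p : ℕ => ¬ (p:ℝ) ^ ε < 2), w p = 1 := by
        rw [Finset.prod_congr rfl (fun p hp => ?_), Finset.prod_const_one]
        simp only [Finset.mem_filter] at hp
        simp [hw, if_neg hp.2]
      rw [h1, h2, mul_one]
    rw [hwprod]
    apply pow_le_pow_right₀ hK1
    have hsub : n.primeFactors.filter (fun p : ℕ => (p:ℝ) ^ ε < 2) ⊆ Finset.range B := by
      intro p hpmem
      simp only [Finset.mem_filter] at hpmem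
      rw [Finset.mem_range]
      by_contra hge
      push_neg at hge
      have h1 : (2:ℝ) ^ (1/ε) ≤ (B:ℝ) := Nat.le_ceil _
      have h2 : (B:ℝ) ≤ (p:ℝ) := by exact_mod_cast hge
      have h3 : ((2:ℝ) ^ (1/ε)) ^ ε ≤ (p:ℝ) ^ ε :=
        Real.rpow_le_rpow (by positivity) (le_trans h1 h2) (le_of_lt hε)
      rw [← Real.rpow_mul (by norm_num), one_div, inv_mul_cancel₀ (ne_of_gt hε),
        Real.rpow_one] at h3
      linarith [hpmem.2]
    calc (n.primeFactors.filter (fun p : ℕ => (p:ℝ) ^ ε < 2)).card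
        ≤ (Finset.range B).card := Finset.card_le_card hsub
      _ = B := Finset.card_range B
  calc (n.divisors.card : ℝ) ≤ (∏ p ∈ n.primeFactors, w p) * (n:ℝ) ^ ε := by
        rw [← step2]; exact step1
    _ ≤ K ^ B * (n:ℝ) ^ ε := mul_le_mul_of_nonneg_right step3 (by positivity)

/-- Counting integers in `[M,2M]` whose square lies in a window of length `2h/|A|`. -/
lemma count_key {M : ℝ} (hM : 1 ≤ M) {A : ℤ} (hA : A ≠ 0) (c h : ℝ) (hh : 0 ≤ h)
    (P : ℤ → Prop) [DecidablePred P]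
    (hP : ∀ x : ℤ, P x → |(A:ℝ) * (x:ℝ)^2 + c| ≤ h) :
    (((Finset.Icc ⌈M⌉ ⌊2*M⌋).filter P).card : ℝ) ≤ h / (|(A:ℝ)| * M) + 1 := by
  have hApos : (1:ℝ) ≤ |(A:ℝ)| := by
    have : (1:ℤ) ≤ |A| := Int.one_le_abs (by omega)
    calc (1:ℝ) ≤ ((|A| : ℤ) : ℝ) := by exact_mod_cast this
      _ = |(A:ℝ)| := by push_cast; rfl
  have hMpos : (0:ℝ) < M := by linarith
  have hden : (0:ℝ) < |(A:ℝ)| * M := by nlinarith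
  set K := (Finset.Icc ⌈M⌉ ⌊2*M⌋).filter P with hK
  rcases K.eq_empty_or_nonempty with he | hne
  · rw [he]; simp; positivity
  · set x₀ := K.min' hne with hx0
    have hx0mem : x₀ ∈ K := K.min'_mem hne
    have hx0M : M ≤ (x₀ : ℝ) := by
      have := (Finset.mem_filter.1 hx0mem).1
      rw [Finset.mem_Icc] at this
      calc M ≤ ((⌈M⌉ : ℤ) : ℝ) := Int.le_ceil M
        _ ≤ (x₀ : ℝ) := by exact_mod_cast this.1
    have key : ∀ y ∈ K, (y:ℝ) - (x₀:ℝ) ≤ h / (|(A:ℝ)| * M) := by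
      intro y hy
      have hyge : x₀ ≤ y := K.min'_le y hy
      have hygeR : (x₀:ℝ) ≤ (y:ℝ) := by exact_mod_cast hyge
      have h1 : |(A:ℝ) * (y:ℝ)^2 + c| ≤ h := hP y (Finset.mem_filter.1 hy).2
      have h2 : |(A:ℝ) * (x₀:ℝ)^2 + c| ≤ h := hP x₀ (Finset.mem_filter.1 hx0mem).2
      have h3 : |(A:ℝ)| * ((y:ℝ)^2 - (x₀:ℝ)^2) ≤ 2 * h := by
        have habs : |(A:ℝ) * ((y:ℝ)^2 - (x₀:ℝ)^2)| ≤ 2 * h := by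
          have hdiff : (A:ℝ) * ((y:ℝ)^2 - (x₀:ℝ)^2)
              = ((A:ℝ) * (y:ℝ)^2 + c) - ((A:ℝ) * (x₀:ℝ)^2 + c) := by ring
          rw [hdiff]
          calc _ ≤ |(A:ℝ) * (y:ℝ)^2 + c| + |(A:ℝ) * (x₀:ℝ)^2 + c| := abs_sub _ _
            _ ≤ 2 * h := by linarith
        calc |(A:ℝ)| * ((y:ℝ)^2 - (x₀:ℝ)^2) ≤ |(A:ℝ) * ((y:ℝ)^2 - (x₀:ℝ)^2)| := by
              rw [abs_mul]
              apply mul_le_mul_of_nonneg_left (le_abs_self _) (abs_nonneg _)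
          _ ≤ 2 * h := habs
      have h4 : 2 * M * ((y:ℝ) - (x₀:ℝ)) ≤ (y:ℝ)^2 - (x₀:ℝ)^2 := by nlinarith
      rw [le_div_iff₀ hden]
      have hAnn : (0:ℝ) ≤ |(A:ℝ)| := abs_nonneg _
      nlinarith [mul_le_mul_of_nonneg_left h4 hAnn]
    have hsub : K ⊆ Finset.Icc x₀ (x₀ + ⌊h / (|(A:ℝ)| * M)⌋) := by
      intro y hy
      rw [Finset.mem_Icc]
      refine ⟨K.min'_le y hy, ?_⟩
      have hk := key y hy
      have h5 : (y : ℝ) ≤ (x₀:ℝ) + h / (|(A:ℝ)| * M) := by linarith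
      have h6 : (y - x₀ : ℤ) ≤ ⌊h / (|(A:ℝ)| * M)⌋ := by
        rw [Int.le_floor]; push_cast; linarith
      omega
    have hfl : (0:ℤ) ≤ ⌊h / (|(A:ℝ)| * M)⌋ := by
      apply Int.floor_nonneg.2; positivity
    calc (K.card : ℝ) ≤ ((Finset.Icc x₀ (x₀ + ⌊h / (|(A:ℝ)| * M)⌋)).card : ℝ) := by
          exact_mod_cast Finset.card_le_card hsub
      _ = ((⌊h / (|(A:ℝ)| * M)⌋ + 1).toNat : ℝ) := by
          rw [Int.card_Icc]; congr 1; omega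
      _ ≤ h / (|(A:ℝ)| * M) + 1 := by
          have hcast : (((⌊h / (|(A:ℝ)| * M)⌋ + 1).toNat : ℕ) : ℝ)
              = ((⌊h / (|(A:ℝ)| * M)⌋ + 1 : ℤ) : ℝ) := by
            have h1 : ((⌊h / (|(A:ℝ)| * M)⌋ + 1).toNat : ℤ)
                = ⌊h / (|(A:ℝ)| * M)⌋ + 1 := Int.toNat_of_nonneg (by omega)
            exact_mod_cast h1
          rw [hcast]
          push_cast
          linarith [Int.floor_le (h / (|(A:ℝ)| * M))]

/-- Representations of a nonzero integer as a difference of two squares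
are controlled by the divisor function. -/
lemma rep_le_divisors (m : Finset ℤ) (D : ℤ) (hD : D ≠ 0) :
    ((m ×ˢ m).filter (fun q : ℤ × ℤ => q.1 ^ 2 - q.2 ^ 2 = D)).card
      ≤ 2 * D.natAbs.divisors.card := by
  classical
  set T : Finset ℤ := D.natAbs.divisors.image (fun d : ℕ => (d : ℤ)) ∪
    D.natAbs.divisors.image (fun d : ℕ => -(d : ℤ)) with hT
  have hmaps : ∀ q ∈ (m ×ˢ m).filter (fun q : ℤ × ℤ => q.1 ^ 2 - q.2 ^ 2 = D),
      q.1 - q.2 ∈ T := by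
    intro q hq
    have heq : q.1 ^ 2 - q.2 ^ 2 = D := (Finset.mem_filter.1 hq).2
    have hdvd : (q.1 - q.2) ∣ D := ⟨q.1 + q.2, by linear_combination -heq⟩
    have hne : q.1 - q.2 ≠ 0 := by
      intro h0; apply hD; rw [← heq]; have : q.1 = q.2 := by omega
      rw [this]; ring
    have hdvd' : (q.1 - q.2).natAbs ∣ D.natAbs := Int.natAbs_dvd_natAbs.2 hdvd
    have hmem : (q.1 - q.2).natAbs ∈ D.natAbs.divisors :=
      Nat.mem_divisors.2 ⟨hdvd', by simpa using hD⟩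
    rcases le_or_gt 0 (q.1 - q.2) with hpos | hneg
    · apply Finset.mem_union_left
      apply Finset.mem_image.2 ⟨(q.1 - q.2).natAbs, hmem, by omega⟩
    · apply Finset.mem_union_right
      apply Finset.mem_image.2 ⟨(q.1 - q.2).natAbs, hmem, by omega⟩
  have hinj : ∀ q ∈ (m ×ˢ m).filter (fun q : ℤ × ℤ => q.1 ^ 2 - q.2 ^ 2 = D),
      ∀ q' ∈ (m ×ˢ m).filter (fun q : ℤ × ℤ => q.1 ^ 2 - q.2 ^ 2 = D),
      q.1 - q.2 = q'.1 - q'.2 → q = q' := by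
    intro q hq q' hq' hu
    have heq : q.1 ^ 2 - q.2 ^ 2 = D := (Finset.mem_filter.1 hq).2
    have heq' : q'.1 ^ 2 - q'.2 ^ 2 = D := (Finset.mem_filter.1 hq').2
    have hne : q.1 - q.2 ≠ 0 := by
      intro h0; apply hD; rw [← heq]; have : q.1 = q.2 := by omega
      rw [this]; ring
    have hsum : (q.1 - q.2) * (q.1 + q.2) = (q'.1 - q'.2) * (q'.1 + q'.2) := by
      linear_combination heq - heq'
    rw [← hu] at hsum
    have := mul_left_cancel₀ hne hsum
    have h1 : q.1 = q'.1 := by omega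
    have h2 : q.2 = q'.2 := by omega
    exact Prod.ext h1 h2
  calc ((m ×ˢ m).filter (fun q : ℤ × ℤ => q.1 ^ 2 - q.2 ^ 2 = D)).card
      ≤ T.card := Finset.card_le_card_of_injOn _ hmaps hinj
    _ ≤ D.natAbs.divisors.card + D.natAbs.divisors.card := by
        apply le_trans (Finset.card_union_le _ _)
        exact Nat.add_le_add (Finset.card_image_le) (Finset.card_image_le)
    _ = 2 * D.natAbs.divisors.card := by ring

/-- Double counting: sum of squares of slice counts equals a sum over pairs. -/
lemma sum_sq_card_eq (m : Finset ℤ) (pairs : Finset (ℤ × ℤ)) (cond : ℤ × ℤ → ℤ → Prop)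
    [∀ q x, Decidable (cond q x)] :
    ∑ x ∈ m, ((pairs.filter (fun q => cond q x)).card) ^ 2
      = ∑ qq ∈ pairs ×ˢ pairs,
          (m.filter (fun x => cond qq.1 x ∧ cond qq.2 x)).card := by
  have hite : ∀ (P Q : Prop) [Decidable P] [Decidable Q],
      (if P then (1:ℕ) else 0) * (if Q then 1 else 0) = if P ∧ Q then 1 else 0 := by
    intro P Q _ _
    split_ifs <;> simp_all
  have L1 : ∀ x, ((pairs.filter (fun q => cond q x)).card) ^ 2
      = ∑ q ∈ pairs, ∑ q' ∈ pairs, (if cond q x ∧ cond q' x then (1:ℕ) else 0) := by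
    intro x
    rw [Finset.card_filter, sq, Finset.sum_mul_sum]
    simp only [hite]
  simp only [L1]
  simp only [Finset.card_filter, Finset.sum_product]
  rw [Finset.sum_comm]
  refine Finset.sum_congr rfl fun q _ => ?_
  rw [Finset.sum_comm]


noncomputable def boxZ (M : ℝ) : Finset ℤ := Finset.Icc ⌈M⌉ ⌊2*M⌋

def cond3 (a₁ a₂ a₃ : ℤ) (H : ℝ) (q : ℤ × ℤ) (x₃ : ℤ) : Prop :=
  |(a₁:ℝ)*(q.1:ℝ)^2 + (a₂:ℝ)*(q.2:ℝ)^2 + (a₃:ℝ)*(x₃:ℝ)^2| ≤ H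

open scoped Classical in
noncomputable def solset (a₁ a₂ a₃ : ℤ) (M H : ℝ) : Finset (ℤ × (ℤ × ℤ)) :=
  ((boxZ M) ×ˢ ((boxZ M) ×ˢ (boxZ M))).filter (fun p => cond3 a₁ a₂ a₃ H p.2 p.1)

def good (a₁ a₂ : ℤ) (H : ℝ) (qq : (ℤ × ℤ) × (ℤ × ℤ)) : Prop :=
  |(a₁:ℝ)*((qq.1.1:ℝ)^2 - (qq.2.1:ℝ)^2) + (a₂:ℝ)*((qq.1.2:ℝ)^2 - (qq.2.2:ℝ)^2)| ≤ 2*H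

open scoped Classical in
noncomputable def Qset (a₁ a₂ : ℤ) (M H : ℝ) : Finset ((ℤ × ℤ) × (ℤ × ℤ)) :=
  (((boxZ M) ×ˢ (boxZ M)) ×ˢ ((boxZ M) ×ˢ (boxZ M))).filter (good a₁ a₂ H)

lemma boxZ_mem {M : ℝ} (hM : 1 ≤ M) {x : ℤ} (hx : x ∈ boxZ M) :
    M ≤ (x:ℝ) ∧ (x:ℝ) ≤ 2*M := by
  rw [boxZ, Finset.mem_Icc] at hx
  constructor
  · calc M ≤ ((⌈M⌉:ℤ):ℝ) := Int.le_ceil M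
      _ ≤ (x:ℝ) := by exact_mod_cast hx.1
  · calc (x:ℝ) ≤ ((⌊2*M⌋:ℤ):ℝ) := by exact_mod_cast hx.2
      _ ≤ 2*M := Int.floor_le _

lemma boxZ_card {M : ℝ} (hM : 1 ≤ M) : ((boxZ M).card : ℝ) ≤ 2*M := by
  rw [boxZ, Int.card_Icc]
  rcases le_or_gt (⌊2*M⌋ + 1 - ⌈M⌉) 0 with h | h
  · rw [Int.toNat_of_nonpos h]; simp; linarith
  · have hcast : (((⌊2*M⌋ + 1 - ⌈M⌉).toNat : ℕ) : ℝ) = ((⌊2*M⌋ + 1 - ⌈M⌉ : ℤ) : ℝ) := by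
      have := Int.toNat_of_nonneg (le_of_lt h)
      exact_mod_cast this
    rw [hcast]
    push_cast
    have h1 : (⌊2*M⌋ : ℝ) ≤ 2*M := Int.floor_le _
    have h2 : M ≤ (⌈M⌉ : ℝ) := Int.le_ceil _
    linarith

lemma ncount_le_solset (a₁ a₂ a₃ : ℤ) (M H : ℝ) (hM : 1 ≤ M) :
    (Set.ncard {x : Fin 3 → ℤ | (∀ i, M ≤ (x i : ℝ) ∧ (x i : ℝ) ≤ 2 * M) ∧
      |(a₁ : ℝ) * (x 0 : ℝ) ^ 2 + (a₂ : ℝ) * (x 1 : ℝ) ^ 2 + (a₃ : ℝ) * (x 2 : ℝ) ^ 2| ≤ H})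
      ≤ (solset a₁ a₂ a₃ M H).card := by
  classical
  set S := {x : Fin 3 → ℤ | (∀ i, M ≤ (x i : ℝ) ∧ (x i : ℝ) ≤ 2 * M) ∧
      |(a₁ : ℝ) * (x 0 : ℝ) ^ 2 + (a₂ : ℝ) * (x 1 : ℝ) ^ 2 + (a₃ : ℝ) * (x 2 : ℝ) ^ 2| ≤ H}
    with hS
  have hinj : Function.Injective (fun x : Fin 3 → ℤ => (x 2, (x 0, x 1))) := by
    intro x y hxy
    simp only [Prod.mk.injEq] at hxy
    funext i
    fin_cases i
    · exact hxy.2.1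
    · exact hxy.2.2
    · exact hxy.1
  have hsub : (fun x : Fin 3 → ℤ => (x 2, (x 0, x 1))) '' S ⊆ ↑(solset a₁ a₂ a₃ M H) := by
    rintro p ⟨x, hx, rfl⟩
    rw [hS, Set.mem_setOf_eq] at hx
    simp only [Finset.coe_filter, solset, Set.mem_setOf_eq, Finset.mem_product]
    have hbox : ∀ i : Fin 3, x i ∈ boxZ M := by
      intro i
      rw [boxZ, Finset.mem_Icc]
      exact ⟨Int.ceil_le.2 (hx.1 i).1, Int.le_floor.2 (hx.1 i).2⟩
    exact ⟨⟨hbox 2, hbox 0, hbox 1⟩, hx.2⟩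
  calc S.ncard = ((fun x : Fin 3 → ℤ => (x 2, (x 0, x 1))) '' S).ncard :=
        (Set.ncard_image_of_injective S hinj).symm
    _ ≤ (↑(solset a₁ a₂ a₃ M H) : Set (ℤ × (ℤ × ℤ))).ncard := by
        apply Set.ncard_le_ncard hsub (Finset.finite_toSet _)
    _ = (solset a₁ a₂ a₃ M H).card := Set.ncard_coe_finset _

open scoped Classical in
lemma solsq_le (a₁ a₂ a₃ : ℤ) (M H : ℝ) (hM : 1 ≤ M) (hH : 1 ≤ H) (ha₃ : a₃ ≠ 0) :
    ((solset a₁ a₂ a₃ M H).card : ℝ)^2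
      ≤ (2*M) * (((Qset a₁ a₂ M H).card : ℝ) * (H / (|(a₃:ℝ)| * M) + 1)) := by
  have hslice : (solset a₁ a₂ a₃ M H).card
      = ∑ x₃ ∈ boxZ M,
          (((boxZ M) ×ˢ (boxZ M)).filter (fun q => cond3 a₁ a₂ a₃ H q x₃)).card := by
    rw [solset, Finset.card_filter, Finset.sum_product]
    simp only [Finset.card_filter]
  have hCS : ((solset a₁ a₂ a₃ M H).card : ℝ)^2
      ≤ ((boxZ M).card : ℝ) * ∑ x₃ ∈ boxZ M,
          ((((boxZ M) ×ˢ (boxZ M)).filter (fun q => cond3 a₁ a₂ a₃ H q x₃)).card : ℝ)^2 := by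
    rw [hslice]
    push_cast
    exact sq_sum_le_card_mul_sum_sq
  have hdouble : ∑ x₃ ∈ boxZ M,
      ((((boxZ M) ×ˢ (boxZ M)).filter (fun q => cond3 a₁ a₂ a₃ H q x₃)).card : ℝ)^2
      = ∑ qq ∈ ((boxZ M) ×ˢ (boxZ M)) ×ˢ ((boxZ M) ×ˢ (boxZ M)),
          (((boxZ M).filter (fun x₃ => cond3 a₁ a₂ a₃ H qq.1 x₃ ∧
            cond3 a₁ a₂ a₃ H qq.2 x₃)).card : ℝ) := by
    push_cast
    exact_mod_cast congrArg (Nat.cast : ℕ → ℝ)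
      (sum_sq_card_eq (boxZ M) ((boxZ M) ×ˢ (boxZ M)) (cond3 a₁ a₂ a₃ H))
  have hcnt : ∀ qq ∈ ((boxZ M) ×ˢ (boxZ M)) ×ˢ ((boxZ M) ×ˢ (boxZ M)),
      (((boxZ M).filter (fun x₃ => cond3 a₁ a₂ a₃ H qq.1 x₃ ∧
          cond3 a₁ a₂ a₃ H qq.2 x₃)).card : ℝ)
        ≤ if good a₁ a₂ H qq then (H / (|(a₃:ℝ)| * M) + 1) else 0 := by
    intro qq _
    by_cases hg : good a₁ a₂ H qq
    · rw [if_pos hg]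
      apply count_key hM ha₃ ((a₁:ℝ)*(qq.1.1:ℝ)^2 + (a₂:ℝ)*(qq.1.2:ℝ)^2) H (by linarith)
      intro x₃ hx₃
      have h1 := hx₃.1
      rw [cond3] at h1
      have hid : (a₃:ℝ)*(x₃:ℝ)^2 + ((a₁:ℝ)*(qq.1.1:ℝ)^2 + (a₂:ℝ)*(qq.1.2:ℝ)^2)
          = (a₁:ℝ)*(qq.1.1:ℝ)^2 + (a₂:ℝ)*(qq.1.2:ℝ)^2 + (a₃:ℝ)*(x₃:ℝ)^2 := by ring
      rw [hid]
      exact h1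
    · rw [if_neg hg]
      have hempty : ((boxZ M).filter (fun x₃ => cond3 a₁ a₂ a₃ H qq.1 x₃ ∧
          cond3 a₁ a₂ a₃ H qq.2 x₃)) = ∅ := by
        rw [Finset.filter_eq_empty_iff]
        intro x₃ _ hc
        apply hg
        obtain ⟨hca, hcb⟩ := hc
        rw [cond3] at hca hcb
        rw [good]
        have hid : (a₁:ℝ)*((qq.1.1:ℝ)^2-(qq.2.1:ℝ)^2) + (a₂:ℝ)*((qq.1.2:ℝ)^2-(qq.2.2:ℝ)^2)
            = ((a₁:ℝ)*(qq.1.1:ℝ)^2 + (a₂:ℝ)*(qq.1.2:ℝ)^2 + (a₃:ℝ)*(x₃:ℝ)^2)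
              - ((a₁:ℝ)*(qq.2.1:ℝ)^2 + (a₂:ℝ)*(qq.2.2:ℝ)^2 + (a₃:ℝ)*(x₃:ℝ)^2) := by ring
        rw [hid]
        calc |((a₁:ℝ)*(qq.1.1:ℝ)^2 + (a₂:ℝ)*(qq.1.2:ℝ)^2 + (a₃:ℝ)*(x₃:ℝ)^2)
              - ((a₁:ℝ)*(qq.2.1:ℝ)^2 + (a₂:ℝ)*(qq.2.2:ℝ)^2 + (a₃:ℝ)*(x₃:ℝ)^2)|
            ≤ |(a₁:ℝ)*(qq.1.1:ℝ)^2 + (a₂:ℝ)*(qq.1.2:ℝ)^2 + (a₃:ℝ)*(x₃:ℝ)^2|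
              + |(a₁:ℝ)*(qq.2.1:ℝ)^2 + (a₂:ℝ)*(qq.2.2:ℝ)^2 + (a₃:ℝ)*(x₃:ℝ)^2| := abs_sub _ _
          _ ≤ 2*H := by linarith
      rw [hempty]
      simp
  have hsum_cnt : ∑ qq ∈ ((boxZ M) ×ˢ (boxZ M)) ×ˢ ((boxZ M) ×ˢ (boxZ M)),
      (((boxZ M).filter (fun x₃ => cond3 a₁ a₂ a₃ H qq.1 x₃ ∧
          cond3 a₁ a₂ a₃ H qq.2 x₃)).card : ℝ)
      ≤ ((Qset a₁ a₂ M H).card : ℝ) * (H / (|(a₃:ℝ)| * M) + 1) := by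
    calc ∑ qq ∈ ((boxZ M) ×ˢ (boxZ M)) ×ˢ ((boxZ M) ×ˢ (boxZ M)),
        (((boxZ M).filter (fun x₃ => cond3 a₁ a₂ a₃ H qq.1 x₃ ∧
            cond3 a₁ a₂ a₃ H qq.2 x₃)).card : ℝ)
        ≤ ∑ qq ∈ ((boxZ M) ×ˢ (boxZ M)) ×ˢ ((boxZ M) ×ˢ (boxZ M)),
            (if good a₁ a₂ H qq then (H / (|(a₃:ℝ)| * M) + 1) else 0) :=
          Finset.sum_le_sum hcnt
      _ = ∑ qq ∈ Qset a₁ a₂ M H, (H / (|(a₃:ℝ)| * M) + 1) := by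
          rw [Qset, Finset.sum_filter]
      _ = ((Qset a₁ a₂ M H).card : ℝ) * (H / (|(a₃:ℝ)| * M) + 1) := by
          rw [Finset.sum_const, nsmul_eq_mul]
  have hsumnn : (0:ℝ) ≤ ∑ x₃ ∈ boxZ M,
      ((((boxZ M) ×ˢ (boxZ M)).filter (fun q => cond3 a₁ a₂ a₃ H q x₃)).card : ℝ)^2 := by
    apply Finset.sum_nonneg
    intro x _
    positivity
  calc ((solset a₁ a₂ a₃ M H).card : ℝ)^2
      ≤ ((boxZ M).card : ℝ) * ∑ x₃ ∈ boxZ M,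
          ((((boxZ M) ×ˢ (boxZ M)).filter (fun q => cond3 a₁ a₂ a₃ H q x₃)).card : ℝ)^2 := hCS
    _ ≤ (2*M) * ∑ x₃ ∈ boxZ M,
          ((((boxZ M) ×ˢ (boxZ M)).filter (fun q => cond3 a₁ a₂ a₃ H q x₃)).card : ℝ)^2 :=
        mul_le_mul_of_nonneg_right (boxZ_card hM) hsumnn
    _ ≤ (2*M) * (((Qset a₁ a₂ M H).card : ℝ) * (H / (|(a₃:ℝ)| * M) + 1)) := by
        apply mul_le_mul_of_nonneg_left _ (by linarith)
        rw [hdouble]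
        exact hsum_cnt

open scoped Classical in
lemma Qdiag_bound (a₁ a₂ : ℤ) (M H : ℝ) (hM : 1 ≤ M) (hH : 1 ≤ H) (ha₁ : a₁ ≠ 0) :
    (((Qset a₁ a₂ M H).filter (fun qq => qq.1.2 = qq.2.2)).card : ℝ)
      ≤ (2*M)^2 * (2*H / (|(a₁:ℝ)| * M) + 1) := by
  set T1 := ((boxZ M) ×ˢ (boxZ M)).filter
    (fun r : ℤ × ℤ => |(a₁:ℝ)*(r.1:ℝ)^2 - (a₁:ℝ)*(r.2:ℝ)^2| ≤ 2*H) with hT1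
  have hstepA : ((Qset a₁ a₂ M H).filter (fun qq => qq.1.2 = qq.2.2)).card
      ≤ ((boxZ M) ×ˢ T1).card := by
    apply Finset.card_le_card_of_injOn (fun qq => (qq.1.2, (qq.1.1, qq.2.1)))
    · intro qq hqq
      rw [Finset.mem_coe, Finset.mem_filter] at hqq
      obtain ⟨hqQ, hdiag⟩ := hqq
      rw [Qset, Finset.mem_filter, Finset.mem_product] at hqQ
      obtain ⟨⟨hq1, hq2⟩, hgood⟩ := hqQ
      rw [Finset.mem_product] at hq1 hq2
      rw [Finset.mem_coe, Finset.mem_product]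
      refine ⟨hq1.2, ?_⟩
      rw [hT1, Finset.mem_filter, Finset.mem_product]
      refine ⟨⟨hq1.1, hq2.1⟩, ?_⟩
      rw [good] at hgood
      have he : ((qq.2.2 : ℤ) : ℝ) = ((qq.1.2 : ℤ) : ℝ) := by
        exact_mod_cast congrArg (fun z : ℤ => (z:ℝ)) hdiag.symm
      have hid : (a₁:ℝ)*((qq.1.1:ℝ))^2 - (a₁:ℝ)*((qq.2.1:ℝ))^2
          = (a₁:ℝ)*((qq.1.1:ℝ)^2 - (qq.2.1:ℝ)^2)
            + (a₂:ℝ)*((qq.1.2:ℝ)^2 - (qq.2.2:ℝ)^2) := by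
        rw [he]; ring
      rw [hid]
      exact hgood
    · intro qq hqq qq' hqq' hf
      simp only [Prod.mk.injEq] at hf
      rw [Finset.mem_coe, Finset.mem_filter] at hqq hqq'
      have hd : qq.1.2 = qq.2.2 := hqq.2
      have hd' : qq'.1.2 = qq'.2.2 := hqq'.2
      have h12 : qq.1.2 = qq'.1.2 := hf.1
      have h11 : qq.1.1 = qq'.1.1 := hf.2.1
      have h21 : qq.2.1 = qq'.2.1 := hf.2.2
      have h22 : qq.2.2 = qq'.2.2 := by rw [← hd, ← hd']; exact h12
      exact Prod.ext (Prod.ext h11 h12) (Prod.ext h21 h22)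
  have hstepB : (((boxZ M) ×ˢ T1).card : ℝ) = ((boxZ M).card : ℝ) * (T1.card : ℝ) := by
    rw [Finset.card_product]; push_cast; ring
  have hstepC : (T1.card : ℝ) ≤ ((boxZ M).card : ℝ) * (2*H / (|(a₁:ℝ)| * M) + 1) := by
    have hT1card : T1.card = ∑ y ∈ boxZ M,
        ((boxZ M).filter (fun x : ℤ => |(a₁:ℝ)*(x:ℝ)^2 - (a₁:ℝ)*(y:ℝ)^2| ≤ 2*H)).card := by
      rw [hT1, Finset.card_filter, Finset.sum_product_right]
      simp only [Finset.card_filter]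
    rw [hT1card]
    push_cast
    calc ∑ y ∈ boxZ M,
        (((boxZ M).filter (fun x : ℤ => |(a₁:ℝ)*(x:ℝ)^2 - (a₁:ℝ)*(y:ℝ)^2| ≤ 2*H)).card : ℝ)
        ≤ ∑ _y ∈ boxZ M, (2*H / (|(a₁:ℝ)| * M) + 1) := by
          apply Finset.sum_le_sum
          intro y _
          apply count_key hM ha₁ (-((a₁:ℝ)*(y:ℝ)^2)) (2*H) (by linarith)
          intro x hx
          have hid : (a₁:ℝ)*(x:ℝ)^2 + -((a₁:ℝ)*(y:ℝ)^2)
              = (a₁:ℝ)*(x:ℝ)^2 - (a₁:ℝ)*(y:ℝ)^2 := by ring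
          rw [hid]
          exact hx
      _ = ((boxZ M).card : ℝ) * (2*H / (|(a₁:ℝ)| * M) + 1) := by
          rw [Finset.sum_const, nsmul_eq_mul]
  have hbound : (0:ℝ) ≤ 2*H / (|(a₁:ℝ)| * M) + 1 := by
    have : (0:ℝ) < |(a₁:ℝ)| := by
      apply abs_pos.2
      exact_mod_cast ha₁
    positivity
  have hbox : ((boxZ M).card : ℝ) ≤ 2*M := boxZ_card hM
  have hboxnn : (0:ℝ) ≤ ((boxZ M).card : ℝ) := Nat.cast_nonneg _
  calc (((Qset a₁ a₂ M H).filter (fun qq => qq.1.2 = qq.2.2)).card : ℝ)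
      ≤ (((boxZ M) ×ˢ T1).card : ℝ) := by exact_mod_cast hstepA
    _ = ((boxZ M).card : ℝ) * (T1.card : ℝ) := hstepB
    _ ≤ ((boxZ M).card : ℝ) * (((boxZ M).card : ℝ) * (2*H / (|(a₁:ℝ)| * M) + 1)) :=
        mul_le_mul_of_nonneg_left hstepC hboxnn
    _ ≤ (2*M) * ((2*M) * (2*H / (|(a₁:ℝ)| * M) + 1)) := by
        apply mul_le_mul hbox (mul_le_mul_of_nonneg_right hbox hbound) _ (by linarith)
        exact mul_nonneg hboxnn hbound
    _ = (2*M)^2 * (2*H / (|(a₁:ℝ)| * M) + 1) := by ring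

open scoped Classical in
lemma rep_bound_eps (a₂ : ℤ) (M ε : ℝ) (hM : 1 ≤ M) (hε : 0 < ε)
    (C₁ : ℝ) (hC₁ : 1 ≤ C₁)
    (hdiv : ∀ n : ℕ, n ≠ 0 → ((n.divisors.card : ℝ)) ≤ C₁ * (n:ℝ)^ε)
    (D : ℤ) (hD : D ≠ 0) :
    ((((boxZ M) ×ˢ (boxZ M)).filter (fun q : ℤ × ℤ => q.1^2 - q.2^2 = D)).card : ℝ)
      ≤ 2*C₁*(4:ℝ)^ε*(M^ε)^2 := by
  have hM0 : (0:ℝ) ≤ M := by linarith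
  rcases (((boxZ M) ×ˢ (boxZ M)).filter
      (fun q : ℤ × ℤ => q.1^2 - q.2^2 = D)).eq_empty_or_nonempty with he | hne
  · rw [he]
    simp only [Finset.card_empty, Nat.cast_zero]
    positivity
  · obtain ⟨q, hq⟩ := hne
    rw [Finset.mem_filter, Finset.mem_product] at hq
    obtain ⟨⟨hq1, hq2⟩, hqD⟩ := hq
    have hb1 := boxZ_mem hM hq1
    have hb2 := boxZ_mem hM hq2
    have hDabs : |(D:ℝ)| ≤ 4*M^2 := by
      have hDr : (D:ℝ) = (q.1:ℝ)^2 - (q.2:ℝ)^2 := by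
        rw [← hqD]; push_cast; ring
      rw [hDr, abs_le]
      constructor <;> nlinarith [hb1.1, hb1.2, hb2.1, hb2.2]
    have hsq : ((4:ℝ)*M^2)^ε = (4:ℝ)^ε * (M^ε)^2 := by
      rw [Real.mul_rpow (by norm_num) (by positivity)]
      congr 1
      rw [← Real.rpow_natCast M 2, ← Real.rpow_natCast (M^ε) 2,
        ← Real.rpow_mul hM0, ← Real.rpow_mul hM0, mul_comm]
    have hrepdvd := rep_le_divisors (boxZ M) D hD
    have hnatabs : D.natAbs ≠ 0 := Int.natAbs_ne_zero.2 hD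
    have hd := hdiv D.natAbs hnatabs
    have hcast : ((D.natAbs : ℕ) : ℝ) = |(D:ℝ)| := by
      rw [Nat.cast_natAbs, Int.cast_abs]
    have hrpow : ((D.natAbs : ℕ) : ℝ)^ε ≤ ((4:ℝ)*M^2)^ε := by
      apply Real.rpow_le_rpow (Nat.cast_nonneg _) _ (le_of_lt hε)
      rw [hcast]; exact hDabs
    calc ((((boxZ M) ×ˢ (boxZ M)).filter (fun q : ℤ × ℤ => q.1^2 - q.2^2 = D)).card : ℝ)
        ≤ 2 * (D.natAbs.divisors.card : ℝ) := by exact_mod_cast hrepdvd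
      _ ≤ 2 * (C₁ * ((D.natAbs : ℕ) : ℝ)^ε) := by linarith [hd]
      _ ≤ 2 * (C₁ * ((4:ℝ)*M^2)^ε) := by
          have := mul_le_mul_of_nonneg_left hrpow (by linarith : (0:ℝ) ≤ C₁)
          linarith
      _ = 2*C₁*(4:ℝ)^ε*(M^ε)^2 := by rw [hsq]; ring

open scoped Classical in
lemma Qoff_bound (a₁ a₂ : ℤ) (M H ε : ℝ) (hM : 1 ≤ M) (hH : 1 ≤ H) (hε : 0 < ε)
    (ha₂ : a₂ ≠ 0) (C₁ : ℝ) (hC₁ : 1 ≤ C₁)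
    (hdiv : ∀ n : ℕ, n ≠ 0 → ((n.divisors.card : ℝ)) ≤ C₁ * (n:ℝ)^ε) :
    (((Qset a₁ a₂ M H).filter (fun qq => ¬ qq.1.2 = qq.2.2)).card : ℝ)
      ≤ (2*M)^2 * ((4*H / |(a₂:ℝ)| + 1) * (2*C₁*(4:ℝ)^ε*(M^ε)^2)) := by
  have hM0 : (0:ℝ) < M := by linarith
  have ha2r : (0:ℝ) < |(a₂:ℝ)| := abs_pos.2 (by exact_mod_cast ha₂)
  have hrepconst : (0:ℝ) ≤ 2*C₁*(4:ℝ)^ε*(M^ε)^2 := by positivity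
  set B2 : Finset ((ℤ × ℤ) × (ℤ × ℤ)) :=
    (((boxZ M) ×ˢ (boxZ M)) ×ˢ ((boxZ M) ×ˢ (boxZ M))).filter
      (fun rr => |(a₁:ℝ)*((rr.1.1:ℝ)^2-(rr.1.2:ℝ)^2)
          + (a₂:ℝ)*((rr.2.1:ℝ)^2-(rr.2.2:ℝ)^2)| ≤ 2*H ∧ rr.2.1 ≠ rr.2.2) with hB2
  have hstepA : ((Qset a₁ a₂ M H).filter (fun qq => ¬ qq.1.2 = qq.2.2)).card ≤ B2.card := by
    apply Finset.card_le_card_of_injOn (fun qq => ((qq.1.1, qq.2.1), (qq.1.2, qq.2.2)))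
    · intro qq hqq
      rw [Finset.mem_coe, Finset.mem_filter] at hqq
      obtain ⟨hqQ, hne⟩ := hqq
      rw [Qset, Finset.mem_filter, Finset.mem_product] at hqQ
      obtain ⟨⟨hq1, hq2⟩, hgood⟩ := hqQ
      rw [Finset.mem_product] at hq1 hq2
      rw [hB2, Finset.mem_coe, Finset.mem_filter, Finset.mem_product]
      refine ⟨⟨?_, ?_⟩, ?_, hne⟩
      · rw [Finset.mem_product]; exact ⟨hq1.1, hq2.1⟩
      · rw [Finset.mem_product]; exact ⟨hq1.2, hq2.2⟩
      · rw [good] at hgood; exact hgood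
    · intro qq hqq qq' hqq' hf
      simp only [Prod.mk.injEq] at hf
      exact Prod.ext (Prod.ext hf.1.1 hf.2.1) (Prod.ext hf.1.2 hf.2.2)
  have hslice : B2.card = ∑ r₁ ∈ (boxZ M) ×ˢ (boxZ M),
      (((boxZ M) ×ˢ (boxZ M)).filter
        (fun r₂ : ℤ × ℤ => |(a₁:ℝ)*((r₁.1:ℝ)^2-(r₁.2:ℝ)^2)
          + (a₂:ℝ)*((r₂.1:ℝ)^2-(r₂.2:ℝ)^2)| ≤ 2*H ∧ r₂.1 ≠ r₂.2)).card := by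
    rw [hB2, Finset.card_filter, Finset.sum_product]
    simp only [Finset.card_filter]
  have hper : ∀ r₁ : ℤ × ℤ,
      ((((boxZ M) ×ˢ (boxZ M)).filter
        (fun r₂ : ℤ × ℤ => |(a₁:ℝ)*((r₁.1:ℝ)^2-(r₁.2:ℝ)^2)
          + (a₂:ℝ)*((r₂.1:ℝ)^2-(r₂.2:ℝ)^2)| ≤ 2*H ∧ r₂.1 ≠ r₂.2)).card : ℝ)
        ≤ (4*H / |(a₂:ℝ)| + 1) * (2*C₁*(4:ℝ)^ε*(M^ε)^2) := by
    intro r₁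
    set t : ℝ := (a₁:ℝ)*((r₁.1:ℝ)^2-(r₁.2:ℝ)^2) with ht
    set lo : ℤ := ⌈-t/(a₂:ℝ) - 2*H / |(a₂:ℝ)|⌉ with hlo
    set hi : ℤ := ⌊-t/(a₂:ℝ) + 2*H / |(a₂:ℝ)|⌋ with hhi
    set Dset : Finset ℤ := (Finset.Icc lo hi).erase 0 with hDset
    set F : Finset (ℤ × ℤ) := ((boxZ M) ×ˢ (boxZ M)).filter
        (fun r₂ : ℤ × ℤ => |t + (a₂:ℝ)*((r₂.1:ℝ)^2-(r₂.2:ℝ)^2)| ≤ 2*H ∧ r₂.1 ≠ r₂.2)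
      with hF
    have hceil1 : (1:ℤ) ≤ ⌈M⌉ := by
      have : (1:ℝ) ≤ (⌈M⌉:ℝ) := le_trans hM (Int.le_ceil M)
      exact_mod_cast this
    have hfib : ∀ r₂ ∈ F, (r₂.1^2 - r₂.2^2) ∈ Dset := by
      intro r₂ hr₂
      rw [hF, Finset.mem_filter, Finset.mem_product] at hr₂
      obtain ⟨⟨hr1, hr2⟩, hcond, hner⟩ := hr₂
      have hx1 : (1:ℤ) ≤ r₂.1 := by
        rw [boxZ, Finset.mem_Icc] at hr1; omega
      have hx2 : (1:ℤ) ≤ r₂.2 := by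
        rw [boxZ, Finset.mem_Icc] at hr2; omega
      have hDne : r₂.1^2 - r₂.2^2 ≠ 0 := by
        intro h0
        have h0' : (r₂.1 - r₂.2) * (r₂.1 + r₂.2) = 0 := by linear_combination h0
        rcases mul_eq_zero.1 h0' with h | h
        · exact hner (by omega)
        · omega
      rw [hDset, Finset.mem_erase]
      refine ⟨hDne, ?_⟩
      rw [Finset.mem_Icc]
      have hcastD : ((r₂.1^2 - r₂.2^2 : ℤ) : ℝ) = (r₂.1:ℝ)^2 - (r₂.2:ℝ)^2 := by
        push_cast; ring
      have habs : |((r₂.1^2 - r₂.2^2 : ℤ) : ℝ) - (-t/(a₂:ℝ))| ≤ 2*H / |(a₂:ℝ)| := by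
        have hrewrite : ((r₂.1^2 - r₂.2^2 : ℤ) : ℝ) - (-t/(a₂:ℝ))
            = (t + (a₂:ℝ)*((r₂.1:ℝ)^2-(r₂.2:ℝ)^2))/(a₂:ℝ) := by
          rw [hcastD]
          field_simp
          ring
        rw [hrewrite, abs_div]
        gcongr
      have hb := abs_le.1 habs
      constructor
      · rw [hlo, Int.ceil_le]
        push_cast
        linarith [hb.1]
      · rw [hhi, Int.le_floor]
        push_cast
        linarith [hb.2]
    have hFcard : F.card = ∑ D ∈ Dset, (F.filter (fun r₂ => r₂.1^2 - r₂.2^2 = D)).card :=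
      Finset.card_eq_sum_card_fiberwise hfib
    have hfiber_le : ∀ D ∈ Dset, ((F.filter (fun r₂ => r₂.1^2 - r₂.2^2 = D)).card : ℝ)
        ≤ 2*C₁*(4:ℝ)^ε*(M^ε)^2 := by
      intro D hD
      have hDne : D ≠ 0 := (Finset.mem_erase.1 hD).1
      have hsub : F.filter (fun r₂ => r₂.1^2 - r₂.2^2 = D)
          ⊆ ((boxZ M) ×ˢ (boxZ M)).filter (fun q : ℤ × ℤ => q.1^2 - q.2^2 = D) := by
        intro r₂ hr₂
        rw [Finset.mem_filter] at hr₂ ⊢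
        obtain ⟨hrF, hrD⟩ := hr₂
        rw [hF, Finset.mem_filter] at hrF
        exact ⟨hrF.1, hrD⟩
      calc ((F.filter (fun r₂ => r₂.1^2 - r₂.2^2 = D)).card : ℝ)
          ≤ ((((boxZ M) ×ˢ (boxZ M)).filter
              (fun q : ℤ × ℤ => q.1^2 - q.2^2 = D)).card : ℝ) := by
            exact_mod_cast Finset.card_le_card hsub
        _ ≤ 2*C₁*(4:ℝ)^ε*(M^ε)^2 := rep_bound_eps a₂ M ε hM hε C₁ hC₁ hdiv D hDne
    have hDsetcard : ((Dset.card : ℕ) : ℝ) ≤ 4*H / |(a₂:ℝ)| + 1 := by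
      have h1 : Dset.card ≤ (Finset.Icc lo hi).card := by
        rw [hDset]; exact Finset.card_erase_le
      have h2 : (Finset.Icc lo hi).card = (hi + 1 - lo).toNat := Int.card_Icc lo hi
      rcases le_or_gt (hi + 1 - lo) 0 with hneg | hpos
      · have : (Finset.Icc lo hi).card = 0 := by rw [h2, Int.toNat_of_nonpos hneg]
        have hD0 : Dset.card = 0 := by omega
        rw [hD0]
        simp only [Nat.cast_zero]
        positivity
      · have hcast : (((hi + 1 - lo).toNat : ℕ) : ℝ) = ((hi + 1 - lo : ℤ) : ℝ) := by
          have := Int.toNat_of_nonneg (le_of_lt hpos)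
          exact_mod_cast this
        have h3 : ((Dset.card : ℕ) : ℝ) ≤ (((hi + 1 - lo).toNat : ℕ) : ℝ) := by
          exact_mod_cast le_trans h1 (le_of_eq h2)
        rw [hcast] at h3
        apply le_trans h3
        push_cast
        have hfl : (hi:ℝ) ≤ -t/(a₂:ℝ) + 2*H / |(a₂:ℝ)| := Int.floor_le _
        have hcl : -t/(a₂:ℝ) - 2*H / |(a₂:ℝ)| ≤ (lo:ℝ) := Int.le_ceil _
        have h4 : 4*H / |(a₂:ℝ)| = 2*(2*H / |(a₂:ℝ)|) := by ring
        rw [h4]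
        linarith
    have hFfinal : (F.card : ℝ) ≤ (4*H / |(a₂:ℝ)| + 1) * (2*C₁*(4:ℝ)^ε*(M^ε)^2) := by
      have hFr : (F.card : ℝ) = ∑ D ∈ Dset,
          ((F.filter (fun r₂ => r₂.1^2 - r₂.2^2 = D)).card : ℝ) := by
        rw [hFcard]; push_cast; ring
      rw [hFr]
      calc ∑ D ∈ Dset, ((F.filter (fun r₂ => r₂.1^2 - r₂.2^2 = D)).card : ℝ)
          ≤ ∑ _D ∈ Dset, (2*C₁*(4:ℝ)^ε*(M^ε)^2) := Finset.sum_le_sum hfiber_le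
        _ = ((Dset.card : ℕ) : ℝ) * (2*C₁*(4:ℝ)^ε*(M^ε)^2) := by
            rw [Finset.sum_const, nsmul_eq_mul]
        _ ≤ (4*H / |(a₂:ℝ)| + 1) * (2*C₁*(4:ℝ)^ε*(M^ε)^2) :=
            mul_le_mul_of_nonneg_right hDsetcard hrepconst
    exact hFfinal
  have hperbound : (B2.card : ℝ)
      ≤ (2*M)^2 * ((4*H / |(a₂:ℝ)| + 1) * (2*C₁*(4:ℝ)^ε*(M^ε)^2)) := by
    have hB2r : (B2.card : ℝ) = ∑ r₁ ∈ (boxZ M) ×ˢ (boxZ M),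
        ((((boxZ M) ×ˢ (boxZ M)).filter
          (fun r₂ : ℤ × ℤ => |(a₁:ℝ)*((r₁.1:ℝ)^2-(r₁.2:ℝ)^2)
            + (a₂:ℝ)*((r₂.1:ℝ)^2-(r₂.2:ℝ)^2)| ≤ 2*H ∧ r₂.1 ≠ r₂.2)).card : ℝ) := by
      rw [hslice]; push_cast; ring
    rw [hB2r]
    have hbound0 : (0:ℝ) ≤ (4*H / |(a₂:ℝ)| + 1) * (2*C₁*(4:ℝ)^ε*(M^ε)^2) := by positivity
    calc ∑ r₁ ∈ (boxZ M) ×ˢ (boxZ M),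
        ((((boxZ M) ×ˢ (boxZ M)).filter
          (fun r₂ : ℤ × ℤ => |(a₁:ℝ)*((r₁.1:ℝ)^2-(r₁.2:ℝ)^2)
            + (a₂:ℝ)*((r₂.1:ℝ)^2-(r₂.2:ℝ)^2)| ≤ 2*H ∧ r₂.1 ≠ r₂.2)).card : ℝ)
        ≤ ∑ _r₁ ∈ (boxZ M) ×ˢ (boxZ M),
            ((4*H / |(a₂:ℝ)| + 1) * (2*C₁*(4:ℝ)^ε*(M^ε)^2)) :=
          Finset.sum_le_sum (fun r₁ _ => hper r₁)
      _ = (((boxZ M) ×ˢ (boxZ M)).card : ℝ)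
            * ((4*H / |(a₂:ℝ)| + 1) * (2*C₁*(4:ℝ)^ε*(M^ε)^2)) := by
          rw [Finset.sum_const, nsmul_eq_mul]
      _ ≤ (2*M)^2 * ((4*H / |(a₂:ℝ)| + 1) * (2*C₁*(4:ℝ)^ε*(M^ε)^2)) := by
          apply mul_le_mul_of_nonneg_right _ hbound0
          rw [Finset.card_product]
          push_cast
          have hb := boxZ_card hM
          have hbnn : (0:ℝ) ≤ ((boxZ M).card : ℝ) := Nat.cast_nonneg _
          nlinarith
  calc (((Qset a₁ a₂ M H).filter (fun qq => ¬ qq.1.2 = qq.2.2)).card : ℝ)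
      ≤ (B2.card : ℝ) := by exact_mod_cast hstepA
    _ ≤ (2*M)^2 * ((4*H / |(a₂:ℝ)| + 1) * (2*C₁*(4:ℝ)^ε*(M^ε)^2)) := hperbound

/-- Lemma 2c for `d = 2`: for `0 < |a₁| ≤ |a₂| ≤ |a₃|`,
`N_{(a₁,a₂,a₃)}(M,H) ≪_ε M^ε(M²H/|a₂| + HM/|a₁| + M²)^{1/2}(M + H/|a₃|)^{1/2}`. -/
theorem NcountTernarySq_bound :
    ∀ ε > (0 : ℝ), ∃ C > (0 : ℝ), ∀ a₁ a₂ a₃ : ℤ, a₁ ≠ 0 → |a₁| ≤ |a₂| → |a₂| ≤ |a₃| →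
      ∀ M H : ℝ, 1 ≤ M → 1 ≤ H →
      (NcountTernarySq a₁ a₂ a₃ M H : ℝ)
        ≤ C * M ^ ε *
          (M ^ 2 * H / |(a₂ : ℝ)| + H * M / |(a₁ : ℝ)| + M ^ 2) ^ ((1 : ℝ) / 2)
          * (M + H / |(a₃ : ℝ)|) ^ ((1 : ℝ) / 2) := by
  intro ε hε
  obtain ⟨C₁, hC₁, hdiv⟩ := divisor_bound' hε
  have h4e : (1:ℝ) ≤ (4:ℝ)^ε := Real.one_le_rpow (by norm_num) (le_of_lt hε)
  set C₀ : ℝ := 2*C₁*(4:ℝ)^ε with hC₀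
  have hC₀1 : 1 ≤ C₀ := by nlinarith
  refine ⟨8*C₀, by linarith, ?_⟩
  intro a₁ a₂ a₃ ha₁ h12 h23 M H hM hH
  classical
  have ha₂ : a₂ ≠ 0 := by
    intro h
    rw [h] at h12
    exact ha₁ (abs_eq_zero.1 (le_antisymm (by simpa using h12) (abs_nonneg _)))
  have ha₃ : a₃ ≠ 0 := by
    intro h
    rw [h] at h23
    have h13 : |a₁| ≤ |(0:ℤ)| := le_trans h12 h23
    exact ha₁ (abs_eq_zero.1 (le_antisymm (by simpa using h13) (abs_nonneg _)))
  have habs1 : (1:ℝ) ≤ |(a₁:ℝ)| := by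
    have h1 : (1:ℤ) ≤ |a₁| := Int.one_le_abs (by omega)
    have : ((|a₁| : ℤ) : ℝ) = |(a₁:ℝ)| := by push_cast; rfl
    rw [← this]; exact_mod_cast h1
  have habs12 : |(a₁:ℝ)| ≤ |(a₂:ℝ)| := by
    have : ((|a₁| : ℤ) : ℝ) ≤ ((|a₂| : ℤ) : ℝ) := by exact_mod_cast h12
    push_cast at this
    convert this using 2 <;> norm_num
  have habs23 : |(a₂:ℝ)| ≤ |(a₃:ℝ)| := by
    have : ((|a₂| : ℤ) : ℝ) ≤ ((|a₃| : ℤ) : ℝ) := by exact_mod_cast h23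
    push_cast at this
    convert this using 2 <;> norm_num
  have h1pos : (0:ℝ) < |(a₁:ℝ)| := by linarith
  have h2pos : (0:ℝ) < |(a₂:ℝ)| := by linarith
  have h3pos : (0:ℝ) < |(a₃:ℝ)| := by linarith
  have hM0 : (0:ℝ) < M := by linarith
  have hH0 : (0:ℝ) < H := by linarith
  set F₁ : ℝ := M^2*H/|(a₂:ℝ)| + H*M/|(a₁:ℝ)| + M^2 with hF₁
  set F₂ : ℝ := M + H/|(a₃:ℝ)| with hF₂
  have hF₁0 : (0:ℝ) ≤ F₁ := by rw [hF₁]; positivity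
  have hF₂0 : (0:ℝ) ≤ F₂ := by rw [hF₂]; positivity
  have hMe : (1:ℝ) ≤ M^ε := Real.one_le_rpow hM (le_of_lt hε)
  have hMe0 : (0:ℝ) ≤ M^ε := by linarith
  -- Bound on the quadruple count
  have hQ : ((Qset a₁ a₂ M H).card : ℝ) ≤ 32*C₀*(M^ε)^2*F₁ := by
    have hsplitn : (Qset a₁ a₂ M H).card
        = ((Qset a₁ a₂ M H).filter (fun qq => qq.1.2 = qq.2.2)).card
          + ((Qset a₁ a₂ M H).filter (fun qq => ¬ qq.1.2 = qq.2.2)).card :=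
      (Finset.card_filter_add_card_filter_not _).symm
    have hdiag := Qdiag_bound a₁ a₂ M H hM hH ha₁
    have hoff := Qoff_bound a₁ a₂ M H ε hM hH hε ha₂ C₁ hC₁ hdiv
    rw [← hC₀] at hoff
    have e1 : (2*M)^2 * (2*H / (|(a₁:ℝ)| * M) + 1) ≤ 12 * F₁ := by
      have heq : (2*M)^2 * (2*H / (|(a₁:ℝ)| * M) + 1) = 8*(H*M/|(a₁:ℝ)|) + 4*M^2 := by
        field_simp
        ring
      rw [heq, hF₁]
      have hA : (0:ℝ) ≤ M^2*H/|(a₂:ℝ)| := by positivity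
      have hB : (0:ℝ) ≤ H*M/|(a₁:ℝ)| := by positivity
      have hC : (0:ℝ) ≤ M^2 := by positivity
      linarith
    have e2 : (2*M)^2 * ((4*H / |(a₂:ℝ)| + 1) * (C₀*(M^ε)^2))
        ≤ 20*C₀*(M^ε)^2*F₁ := by
      have heq : (2*M)^2 * ((4*H / |(a₂:ℝ)| + 1) * (C₀*(M^ε)^2))
          = C₀*(M^ε)^2 * (16*(M^2*H/|(a₂:ℝ)|) + 4*M^2) := by
        field_simp
        ring
      rw [heq]
      have hA : (0:ℝ) ≤ H*M/|(a₁:ℝ)| := by positivity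
      have hB : 16*(M^2*H/|(a₂:ℝ)|) + 4*M^2 ≤ 20*F₁ := by
        rw [hF₁]
        have hC : (0:ℝ) ≤ M^2*H/|(a₂:ℝ)| := by positivity
        have hM2 : (0:ℝ) ≤ M^2 := by positivity
        linarith
      calc C₀*(M^ε)^2 * (16*(M^2*H/|(a₂:ℝ)|) + 4*M^2)
          ≤ C₀*(M^ε)^2 * (20*F₁) := by
            apply mul_le_mul_of_nonneg_left hB (by positivity)
        _ = 20*C₀*(M^ε)^2*F₁ := by ring
    have hMe2 : (1:ℝ) ≤ (M^ε)^2 := one_le_pow₀ hMe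
    have hCme1 : (1:ℝ) ≤ C₀*(M^ε)^2 := by
      calc (1:ℝ) = 1*1 := by norm_num
        _ ≤ C₀*(M^ε)^2 := mul_le_mul hC₀1 hMe2 (by norm_num) (by linarith)
    have h12F : 12*F₁ ≤ 12*(C₀*(M^ε)^2*F₁) := by
      linarith [mul_nonneg hF₁0 (sub_nonneg.2 hCme1)]
    have hoff' : (((Qset a₁ a₂ M H).filter (fun qq => ¬ qq.1.2 = qq.2.2)).card : ℝ)
        ≤ 20*C₀*(M^ε)^2*F₁ := by
      apply le_trans hoff
      apply le_trans _ e2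
      apply le_of_eq
      ring
    calc ((Qset a₁ a₂ M H).card : ℝ)
        = (((Qset a₁ a₂ M H).filter (fun qq => qq.1.2 = qq.2.2)).card : ℝ)
          + (((Qset a₁ a₂ M H).filter (fun qq => ¬ qq.1.2 = qq.2.2)).card : ℝ) := by
          rw [hsplitn]; push_cast; ring
      _ ≤ 12 * F₁ + 20*C₀*(M^ε)^2*F₁ := add_le_add (le_trans hdiag e1) hoff'
      _ ≤ 32*C₀*(M^ε)^2*F₁ := by linarith
  -- Cauchy–Schwarz chain
  have hsol := solsq_le a₁ a₂ a₃ M H hM hH ha₃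
  have hfac : H / (|(a₃:ℝ)| * M) + 1 = F₂ / M := by
    rw [hF₂]
    field_simp
    ring
  have hn2 : ((solset a₁ a₂ a₃ M H).card : ℝ)^2 ≤ 64*C₀*(M^ε)^2*F₁*F₂ := by
    have hfacnn : (0:ℝ) ≤ F₂ / M := by positivity
    calc ((solset a₁ a₂ a₃ M H).card : ℝ)^2
        ≤ (2*M) * (((Qset a₁ a₂ M H).card : ℝ) * (H / (|(a₃:ℝ)| * M) + 1)) := hsol
      _ = (2*M) * (((Qset a₁ a₂ M H).card : ℝ) * (F₂ / M)) := by rw [hfac]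
      _ ≤ (2*M) * ((32*C₀*(M^ε)^2*F₁) * (F₂ / M)) := by
          apply mul_le_mul_of_nonneg_left _ (by linarith)
          exact mul_le_mul_of_nonneg_right hQ hfacnn
      _ = 64*C₀*(M^ε)^2*F₁*F₂ := by
          field_simp
          ring
  have hrhs0 : (0:ℝ) ≤ 8*C₀*M^ε*Real.sqrt F₁*Real.sqrt F₂ := by positivity
  have hfinal : ((solset a₁ a₂ a₃ M H).card : ℝ)
      ≤ 8*C₀*M^ε*Real.sqrt F₁*Real.sqrt F₂ := by
    have hsq2 : ((solset a₁ a₂ a₃ M H).card : ℝ)^2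
        ≤ (8*C₀*M^ε*Real.sqrt F₁*Real.sqrt F₂)^2 := by
      have hexp : (8*C₀*M^ε*Real.sqrt F₁*Real.sqrt F₂)^2
          = 64*(C₀^2)*(M^ε)^2*F₁*F₂ := by
        rw [mul_pow, mul_pow, mul_pow, mul_pow, Real.sq_sqrt hF₁0, Real.sq_sqrt hF₂0]
        ring
      rw [hexp]
      have hrest : (0:ℝ) ≤ (M^ε)^2*F₁*F₂ := by positivity
      have hC₀sq : C₀ ≤ C₀^2 := by
        calc C₀ = C₀*1 := (mul_one C₀).symm
          _ ≤ C₀*C₀ := mul_le_mul_of_nonneg_left hC₀1 (by linarith)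
          _ = C₀^2 := (sq C₀).symm
      have hmul := mul_le_mul_of_nonneg_right hC₀sq hrest
      linarith [hn2, hmul]
    calc ((solset a₁ a₂ a₃ M H).card : ℝ)
        = Real.sqrt (((solset a₁ a₂ a₃ M H).card : ℝ)^2) :=
          (Real.sqrt_sq (Nat.cast_nonneg _)).symm
      _ ≤ Real.sqrt ((8*C₀*M^ε*Real.sqrt F₁*Real.sqrt F₂)^2) := Real.sqrt_le_sqrt hsq2
      _ = 8*C₀*M^ε*Real.sqrt F₁*Real.sqrt F₂ := Real.sqrt_sq hrhs0
  have hN' : NcountTernarySq a₁ a₂ a₃ M H ≤ (solset a₁ a₂ a₃ M H).card :=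
    ncount_le_solset a₁ a₂ a₃ M H hM
  have hN : (NcountTernarySq a₁ a₂ a₃ M H : ℝ) ≤ ((solset a₁ a₂ a₃ M H).card : ℝ) :=
    Nat.cast_le.2 hN'
  rw [← Real.sqrt_eq_rpow, ← Real.sqrt_eq_rpow]
  calc (NcountTernarySq a₁ a₂ a₃ M H : ℝ)
      ≤ ((solset a₁ a₂ a₃ M H).card : ℝ) := hN
    _ ≤ 8*C₀*M^ε*Real.sqrt F₁*Real.sqrt F₂ := hfinal
    _ = 8*C₀ * M^ε * Real.sqrt F₁ * Real.sqrt F₂ := by ring
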